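/- Let M be a symmetric n×n integer matrix whose quadratic enhancement is proper, i.e., q_M(v) ≡ 0 (mod 4) for every v ∈ (ℤ/2)ⁿ in the kernel of M mod 2, and let k be the ℤ/2-dimension of that kernel. Then there exists an integer β such that the Monsky sum satisfies λ(M) = (√2)^{n+k} · exp(iπβ/4). (The class of β in ℤ/8 is the Brown invariant of φ_M.) -/

import Mathlib

/-!
For the `{0,1}`-lift, `q(v + w) ≡ q(v) + q(w) + 2 ṽᵀ M w̃ (mod 4)` when `M` is symmetric. Hence in
`|λ|² = Σ_{v,w} i^{q(v) - q(w)}` the substitution `v = w + u` leaves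
`Σ_u i^{q(u)} Σ_w (-1)^{w̃ᵀ M ũ}`; the inner character sum is `2ⁿ` on the radical `R` and `0` off
it, and properness makes `i^{q(u)} = 1` on `R`, so `|λ|² = 2^{n+k}`. Finally `λ` is a Gaussian
integer of norm `2^m`, hence `(1 + i)^m` times a unit `i^j`, and `1 + i = √2 e^{iπ/4}`,
`i = e^{iπ/2}`.
-/

open Matrix

/-- The `{0,1}`-valued integer lift of a mod-2 vector. -/
def zlift {ι : Type*} (v : ι → ZMod 2) : ι → ℤ := fun i => ((v i).val : ℤ)

/-- The integral quadratic form `q_M(v) = ṽᵀ M ṽ` evaluated on the `{0,1}` lift of `v`. -/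
def qForm {ι : Type*} [Fintype ι] (M : Matrix ι ι ℤ) (v : ι → ZMod 2) : ℤ :=
  ∑ i, ∑ j, zlift v i * M i j * zlift v j

/-- The Monsky sum `λ(M) = Σ_{v ∈ (ℤ/2)ⁿ} i^{q_M(v)}`. -/
noncomputable def monsky {ι : Type*} [Fintype ι] [DecidableEq ι] (M : Matrix ι ι ℤ) : ℂ :=
  ∑ v : ι → ZMod 2, Complex.I ^ qForm M v

open Complex ComplexConjugate
open scoped Real

section Signs

lemma I_zpow_add_four_mul (a t : ℤ) : I ^ (a + 4 * t) = I ^ a := by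
  rw [zpow_add₀ I_ne_zero, _root_.zpow_mul, show I ^ (4 : ℤ) = 1 from I_pow_four,
    _root_.one_zpow, mul_one]

lemma I_zpow_two_mul (b : ℤ) : I ^ (2 * b) = (-1) ^ b := by
  rw [_root_.zpow_mul, show I ^ (2 : ℤ) = -1 from I_sq]

lemma I_zpow_eq_one_of_intCast_eq_zero {q : ℤ} (h : (q : ZMod 4) = 0) : I ^ q = 1 := by
  obtain ⟨t, rfl⟩ := (ZMod.intCast_zmod_eq_zero_iff_dvd q 4).1 h
  simpa using I_zpow_add_four_mul 0 t

lemma zpow_sum₀ {ι G₀ : Type*} [CommGroupWithZero G₀] {a : G₀} (ha : a ≠ 0) (s : Finset ι)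
    (f : ι → ℤ) : a ^ (∑ i ∈ s, f i) = ∏ i ∈ s, a ^ f i := by
  classical
  induction s using Finset.induction_on with
  | empty => simp
  | insert i s hi ih => rw [Finset.sum_insert hi, Finset.prod_insert hi, zpow_add₀ ha, ih]

lemma one_add_neg_one_zpow (c : ℤ) : 1 + (-1 : ℂ) ^ c = if (c : ZMod 2) = 0 then 2 else 0 := by
  by_cases hc : Even c
  · simp [hc.neg_one_zpow, ZMod.intCast_eq_zero_iff_even.2 hc, one_add_one_eq_two]
  · simp [(Int.not_even_iff_odd.1 hc).neg_one_zpow, ZMod.intCast_eq_zero_iff_even, hc]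

end Signs

section QuadraticForm

variable {ι : Type*}

lemma zlift_add (v w : ι → ZMod 2) :
    zlift (v + w) = zlift v + zlift w - 2 • (zlift v * zlift w) := by
  funext i
  have key : ∀ a b : ZMod 2, (((a + b).val : ℤ)) = a.val + b.val - 2 * (a.val * b.val) := by
    decide
  exact key (v i) (w i)

lemma intCast_zlift (v : ι → ZMod 2) : (fun i => (zlift v i : ZMod 2)) = v := by
  funext i
  simp [zlift]

variable [Fintype ι]

lemma Matrix.IsSymm.dotProduct_mulVec_comm {R : Type*} [CommSemiring R] {M : Matrix ι ι R}
    (hM : M.IsSymm) (x y : ι → R) : x ⬝ᵥ M *ᵥ y = y ⬝ᵥ M *ᵥ x := by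
  rw [dotProduct_mulVec, ← mulVec_transpose, hM.eq, dotProduct_comm]

lemma Matrix.IsSymm.add_dotProduct_mulVec_add {R : Type*} [CommRing R] {M : Matrix ι ι R}
    (hM : M.IsSymm) (x y : ι → R) :
    (x + y) ⬝ᵥ M *ᵥ (x + y) = x ⬝ᵥ M *ᵥ x + y ⬝ᵥ M *ᵥ y + 2 * (x ⬝ᵥ M *ᵥ y) := by
  rw [mulVec_add, add_dotProduct, dotProduct_add, dotProduct_add, hM.dotProduct_mulVec_comm y x]
  ring

lemma qForm_eq_dotProduct (M : Matrix ι ι ℤ) (v : ι → ZMod 2) :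
    qForm M v = zlift v ⬝ᵥ M *ᵥ zlift v := by
  simp only [qForm, dotProduct, mulVec, Finset.mul_sum, mul_assoc]

lemma qForm_add {M : Matrix ι ι ℤ} (hM : M.IsSymm) (v w : ι → ZMod 2) :
    ∃ t, qForm M (v + w) = qForm M v + qForm M w + 2 * (zlift v ⬝ᵥ M *ᵥ zlift w) + 4 * t := by
  set c := zlift v * zlift w
  -- `zlift (v + w) = zlift v + zlift w - 2c`; by symmetry the `c`-terms contribute `4 t`.
  refine ⟨c ⬝ᵥ M *ᵥ c - (zlift v + zlift w) ⬝ᵥ M *ᵥ c, ?_⟩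
  rw [qForm_eq_dotProduct, qForm_eq_dotProduct, qForm_eq_dotProduct, zlift_add, sub_eq_add_neg,
    hM.add_dotProduct_mulVec_add, hM.add_dotProduct_mulVec_add]
  simp only [mulVec_neg, neg_dotProduct, dotProduct_neg, mulVec_smul, dotProduct_smul,
    smul_dotProduct, c]
  ring

lemma mulVec_map_intCast_eq (M : Matrix ι ι ℤ) (u : ι → ZMod 2) :
    M.map (Int.cast : ℤ → ZMod 2) *ᵥ u = fun i => ((M *ᵥ zlift u) i : ZMod 2) := by
  funext i
  conv_lhs => rw [← intCast_zlift u]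
  exact (RingHom.map_mulVec (Int.castRingHom (ZMod 2)) M (zlift u) i).symm

lemma I_zpow_qForm_add {M : Matrix ι ι ℤ} (hM : M.IsSymm) (v w : ι → ZMod 2) :
    I ^ qForm M (v + w) = I ^ qForm M v * I ^ qForm M w * (-1) ^ (zlift v ⬝ᵥ M *ᵥ zlift w) := by
  obtain ⟨t, ht⟩ := qForm_add hM v w
  rw [ht, I_zpow_add_four_mul, zpow_add₀ I_ne_zero, zpow_add₀ I_ne_zero, I_zpow_two_mul]

end QuadraticForm

section MonskySum

variable {ι : Type*} [Fintype ι] [DecidableEq ι]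

lemma sum_neg_one_zpow_zlift_dotProduct (c : ι → ℤ) :
    ∑ w : ι → ZMod 2, (-1 : ℂ) ^ (zlift w ⬝ᵥ c)
      = if (fun i => (c i : ZMod 2)) = 0 then 2 ^ Fintype.card ι else 0 := by
  simp only [dotProduct, zlift, zpow_sum₀ (by norm_num : (-1 : ℂ) ≠ 0)]
  rw [← Fintype.prod_sum (fun i (a : ZMod 2) => (-1 : ℂ) ^ ((a.val : ℤ) * c i))]
  have hfactor : ∀ i, ∑ a : ZMod 2, (-1 : ℂ) ^ ((a.val : ℤ) * c i)
      = if (c i : ZMod 2) = 0 then 2 else 0 := by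
    intro i
    rw [← one_add_neg_one_zpow, show (Finset.univ : Finset (ZMod 2)) = {0, 1} by decide,
      Finset.sum_pair zero_ne_one]
    simp [ZMod.val_one]
  simp only [hfactor, Fintype.prod_ite_zero, Finset.prod_const, Finset.card_univ, funext_iff,
    Pi.zero_apply]

lemma sum_neg_one_zpow_zlift_dotProduct_mulVec (M : Matrix ι ι ℤ) (u : ι → ZMod 2) :
    ∑ w : ι → ZMod 2, (-1 : ℂ) ^ (zlift w ⬝ᵥ M *ᵥ zlift u)
      = if M.map (Int.cast : ℤ → ZMod 2) *ᵥ u = 0 then 2 ^ Fintype.card ι else 0 := by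
  rw [sum_neg_one_zpow_zlift_dotProduct, mulVec_map_intCast_eq]

lemma monsky_mul_conj {M : Matrix ι ι ℤ} (hM : M.IsSymm) :
    monsky M * conj (monsky M) = 2 ^ Fintype.card ι *
      ∑ u ∈ Finset.univ.filter (fun u => M.map (Int.cast : ℤ → ZMod 2) *ᵥ u = 0),
        I ^ qForm M u := by
  have hconj : ∀ q : ℤ, conj (I ^ q) = (I ^ q)⁻¹ := fun q => by
    rw [map_zpow₀, conj_I, ← inv_I, _root_.inv_zpow]
  calc monsky M * conj (monsky M)
      = ∑ w, ∑ v, I ^ qForm M v * (I ^ qForm M w)⁻¹ := by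
        rw [monsky, map_sum, Finset.sum_mul_sum, Finset.sum_comm]
        simp only [hconj]
    _ = ∑ w, ∑ u, I ^ qForm M (w + u) * (I ^ qForm M w)⁻¹ := by
        refine Finset.sum_congr rfl fun w _ => ?_
        exact (Equiv.sum_comp (Equiv.addLeft w) _).symm
    _ = ∑ u, I ^ qForm M u * ∑ w, (-1 : ℂ) ^ (zlift w ⬝ᵥ M *ᵥ zlift u) := by
        rw [Finset.sum_comm]
        refine Finset.sum_congr rfl fun u _ => ?_
        rw [Finset.mul_sum]
        refine Finset.sum_congr rfl fun w _ => ?_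
        rw [I_zpow_qForm_add hM]
        field_simp
    _ = _ := by
        simp only [sum_neg_one_zpow_zlift_dotProduct_mulVec, Finset.sum_filter, Finset.mul_sum]
        refine Finset.sum_congr rfl fun u _ => ?_
        split_ifs <;> ring

end MonskySum

lemma Matrix.card_filter_mulVec_eq_zero {m n K : Type*} [Fintype m] [Fintype n] [DecidableEq n]
    [Field K] [Fintype K] [DecidableEq K] (A : Matrix m n K) :
    (Finset.univ.filter fun u => A *ᵥ u = 0).card
      = Fintype.card K ^ Module.finrank K (LinearMap.ker A.mulVecLin) := by
  rw [← Nat.card_eq_fintype_card, ← Module.natCard_eq_pow_finrank, ← Fintype.card_subtype,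
    ← Nat.card_eq_fintype_card]
  rfl

lemma monsky_mul_conj_of_proper {ι : Type*} [Fintype ι] [DecidableEq ι] {M : Matrix ι ι ℤ}
    (hM : M.IsSymm) (hproper : ∀ v : ι → ZMod 2,
      M.map (Int.cast : ℤ → ZMod 2) *ᵥ v = 0 → ((qForm M v : ℤ) : ZMod 4) = 0) :
    monsky M * conj (monsky M) = 2 ^ (Fintype.card ι
      + Module.finrank (ZMod 2) (LinearMap.ker (M.map (Int.cast : ℤ → ZMod 2)).mulVecLin)) := by
  rw [monsky_mul_conj hM, Finset.sum_congr rfl fun u hu =>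
      I_zpow_eq_one_of_intCast_eq_zero (hproper u (Finset.mem_filter.1 hu).2),
    Finset.sum_const, Matrix.card_filter_mulVec_eq_zero, ZMod.card, pow_add]
  ring

lemma I_zpow_mem_range_toComplex (q : ℤ) : I ^ q ∈ GaussianInt.toComplex.range := by
  have hI : I ∈ GaussianInt.toComplex.range := ⟨⟨0, 1⟩, by simp [GaussianInt.toComplex_def']⟩
  rw [I_zpow_eq_zpow_mod, ← Int.toNat_of_nonneg (Int.emod_nonneg q (by norm_num)), zpow_natCast]
  exact pow_mem hI _

lemma monsky_mem_range_toComplex {ι : Type*} [Fintype ι] [DecidableEq ι] (M : Matrix ι ι ℤ) :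
    monsky M ∈ GaussianInt.toComplex.range :=
  Subring.sum_mem _ fun v _ => I_zpow_mem_range_toComplex (qForm M v)

namespace GaussianInt

lemma norm_mk (x y : ℤ) : (⟨x, y⟩ : GaussianInt).norm = x * x + y * y := by
  simp [Zsqrtd.norm_def]

lemma exists_eq_one_add_I_mul_of_even_norm {z : GaussianInt} (hz : Even z.norm) :
    ∃ w : GaussianInt, z = ⟨1, 1⟩ * w := by
  obtain ⟨x, y⟩ := z
  have hxy : Even (x + y) := by
    rw [norm_mk, Int.even_add, Int.even_mul, Int.even_mul, or_self, or_self] at hz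
    exact Int.even_add.2 hz
  obtain ⟨s, hs⟩ := hxy
  exact ⟨⟨s, y - s⟩, by ext <;> simp; omega⟩

lemma exists_toComplex_eq_one_add_I_pow_mul_I_pow (m : ℕ) :
    ∀ z : GaussianInt, z.norm = 2 ^ m → ∃ j : ℕ, (z : ℂ) = (1 + I) ^ m * I ^ j := by
  induction m with
  | zero =>
    rintro ⟨x, y⟩ hz
    rw [norm_mk, pow_zero] at hz
    have hx₁ : -1 ≤ x := by nlinarith
    have hx₂ : x ≤ 1 := by nlinarith
    have hy₁ : -1 ≤ y := by nlinarith
    have hy₂ : y ≤ 1 := by nlinarith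
    rw [toComplex_def']
    interval_cases x <;> interval_cases y <;> simp at hz
    · exact ⟨2, by simp⟩
    · exact ⟨3, by simp⟩
    · exact ⟨1, by simp⟩
    · exact ⟨0, by simp⟩
  | succ m ih =>
    intro z hz
    have heven : Even z.norm := hz ▸ (Int.even_pow.2 ⟨even_two, m.succ_ne_zero⟩)
    obtain ⟨w, rfl⟩ := exists_eq_one_add_I_mul_of_even_norm heven
    have hw : w.norm = 2 ^ m := by
      rw [Zsqrtd.norm_mul, norm_mk, pow_succ] at hz
      linarith
    obtain ⟨j, hj⟩ := ih w hw
    exact ⟨j, by rw [map_mul, hj, toComplex_def']; push_cast; ring⟩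

end GaussianInt

lemma sqrt_two_mul_exp_pi_mul_I_div_four : (√2 : ℂ) * exp (π * I / 4) = 1 + I := by
  rw [show (π * I / 4 : ℂ) = ((π / 4 : ℝ) : ℂ) * I by push_cast; ring, exp_mul_I,
    ← ofReal_cos, ← ofReal_sin, Real.cos_pi_div_four, Real.sin_pi_div_four]
  have h : (√2 : ℂ) * √2 = 2 := by exact_mod_cast Real.mul_self_sqrt zero_le_two
  push_cast
  linear_combination (1 + I) / 2 * h

lemma exp_pi_mul_I_div_four_sq : exp (π * I / 4) ^ 2 = I := by
  rw [← exp_nat_mul]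
  convert exp_pi_div_two_mul_I using 2
  push_cast
  ring

lemma one_add_I_pow_mul_I_pow (m j : ℕ) :
    (1 + I) ^ m * I ^ j = (√2 : ℂ) ^ m * exp (π * I * ((m + 2 * j : ℕ) : ℤ) / 4) := by
  rw [show (π * I * ((m + 2 * j : ℕ) : ℤ) / 4 : ℂ) = (m + 2 * j : ℕ) * (π * I / 4) by
      push_cast; ring,
    exp_nat_mul, pow_add, pow_mul, exp_pi_mul_I_div_four_sq, ← sqrt_two_mul_exp_pi_mul_I_div_four]
  ring

/-- If the quadratic enhancement of a symmetric integer matrix `M` is proper,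
and `k` is the `ℤ/2`-dimension of the kernel of `M` mod 2, then there is an integer `β`
(the Brown invariant) with `λ(M) = (√2)^(n+k) · exp(iπβ/4)`. -/
theorem monsky_of_proper {n : ℕ} (M : Matrix (Fin n) (Fin n) ℤ) (hM : M.IsSymm)
    (hproper : ∀ v : Fin n → ZMod 2,
      (M.map (Int.cast : ℤ → ZMod 2)).mulVec v = 0 → ((qForm M v : ℤ) : ZMod 4) = 0)
    (k : ℕ)
    (hk : k = Module.finrank (ZMod 2)
      (LinearMap.ker (Matrix.mulVecLin (M.map (Int.cast : ℤ → ZMod 2))))) :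
    ∃ β : ℤ, monsky M
      = ((Real.sqrt 2 : ℝ) : ℂ) ^ (n + k) * Complex.exp (Real.pi * Complex.I * β / 4) := by
  obtain ⟨z, hz⟩ := monsky_mem_range_toComplex M
  have hnorm : z.norm = 2 ^ (n + k) := by
    have h := monsky_mul_conj_of_proper hM hproper
    rw [← hz, mul_conj, ← GaussianInt.intCast_complex_norm, Fintype.card_fin, ← hk] at h
    exact_mod_cast h
  obtain ⟨j, hj⟩ := GaussianInt.exists_toComplex_eq_one_add_I_pow_mul_I_pow (n + k) z hnorm
  exact ⟨(n + k + 2 * j : ℕ), by rw [← hz, hj, one_add_I_pow_mul_I_pow]⟩
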